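/- To each string ω ∈ {0,1}^n associate the Young diagram Y(ω) = the set of lattice cells below the monotone lattice path obtained by reading ω left to right (step right for 0, step down for 1) in the U×(n−U) grid, where U is the number of 1's in ω. If ω' = E(ω) is the result of one evolution step, then Y(ω') = K(Y(ω)), where K removes all exposed corners of the Young diagram. -/
import Mathlib


open Finset

/-- The k-th bit of a string of length `n`, padded with `false` out of range. -/
def bit (n : ℕ) (ω : Fin n → Bool) (k : ℕ) : Bool :=
  if h : k < n then ω ⟨k, h⟩ else false

/-- One step of the evolution: every occurrence of "01" is replaced by "10"
(simultaneously).  `E(ω)_i = 1` iff `(ω_i = 1 ∧ ¬(i ≥ 2 ∧ ω_{i-1} = 0)) ∨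
(ω_i = 0 ∧ i < n ∧ ω_{i+1} = 1)` (1-indexed; here 0-indexed). -/
def evolve (n : ℕ) (ω : Fin n → Bool) : Fin n → Bool :=
  fun i =>
    (bit n ω i.val && !(decide (0 < i.val) && !bit n ω (i.val - 1)))
      || (!bit n ω i.val && bit n ω (i.val + 1))

/-- A string is stable iff it contains no occurrence of "01". -/
def IsStable (n : ℕ) (ω : Fin n → Bool) : Prop :=
  ∀ k : ℕ, ¬(bit n ω k = false ∧ bit n ω (k + 1) = true)

/-- The stabilization time: the least number of applications of `evolve`
after which the string is stable. -/
noncomputable def stabTime (n : ℕ) (ω : Fin n → Bool) : ℕ :=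
  sInf {m : ℕ | IsStable n ((evolve n)^[m] ω)}

/-- A Young diagram: a finite down-closed set of cells in ℕ≥1 × ℕ≥1. -/
def IsYoungDiagram (Y : Finset (ℕ × ℕ)) : Prop :=
  (∀ c ∈ Y, 1 ≤ c.1 ∧ 1 ≤ c.2) ∧
    ∀ c ∈ Y, ∀ i j : ℕ, 1 ≤ i → 1 ≤ j → i ≤ c.1 → j ≤ c.2 → (i, j) ∈ Y

/-- The corner-cutting map: remove all exposed corners, i.e. cells `(i,j)` with
`(i+1,j) ∉ Y` and `(i,j+1) ∉ Y`. -/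
def cutCorners (Y : Finset (ℕ × ℕ)) : Finset (ℕ × ℕ) :=
  Y.filter fun c => (c.1 + 1, c.2) ∈ Y ∨ (c.1, c.2 + 1) ∈ Y

/-- Depth of a Young diagram: `max {i + j - 1 : (i,j) ∈ Y}`, with `depth ∅ = 0`. -/
def depth (Y : Finset (ℕ × ℕ)) : ℕ := Y.sup fun c => c.1 + c.2 - 1

/-- Number of zeros among the first `m` bits of `ω`. -/
def zerosBefore (n : ℕ) (ω : Fin n → Bool) (m : ℕ) : ℕ :=
  (Finset.univ.filter fun l : Fin n => l.val < m ∧ ω l = false).card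

/-- Number of ones among the bits of `ω` from position `m` (0-indexed) on. -/
def onesFrom (n : ℕ) (ω : Fin n → Bool) (m : ℕ) : ℕ :=
  (Finset.univ.filter fun l : Fin n => m ≤ l.val ∧ ω l = true).card

open Classical in
/-- The Young diagram associated to a binary string: the cells below the
monotone lattice path reading ω left to right (0 = right step, 1 = down step).
`(i,j) ∈ Y(ω)` iff there is a cut point `m` with at least `i` zeros among the
first `m` bits and at least `j` ones among the remaining bits. -/
noncomputable def diag (n : ℕ) (ω : Fin n → Bool) : Finset (ℕ × ℕ) :=
  (Finset.Icc 1 n ×ˢ Finset.Icc 1 n).filter fun c =>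
    1 ≤ c.1 ∧ 1 ≤ c.2 ∧ ∃ m ≤ n, c.1 ≤ zerosBefore n ω m ∧ c.2 ≤ onesFrom n ω m

-- auxiliary
def chi (n : ℕ) (ω : Fin n → Bool) (m : ℕ) : ℕ :=
  if 0 < m ∧ bit n ω (m - 1) = false ∧ bit n ω m = true then 1 else 0

lemma bit_out {n : ℕ} {ω : Fin n → Bool} {m : ℕ} (h : n ≤ m) : bit n ω m = false := by
  rw [bit, dif_neg (by omega)]

lemma bit_lt {n : ℕ} {ω : Fin n → Bool} {m : ℕ} (h : bit n ω m = true) : m < n := by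
  by_contra hc; rw [bit_out (by omega)] at h; exact Bool.false_ne_true h

lemma bit_evolve (n : ℕ) (ω : Fin n → Bool) (m : ℕ) :
    bit n (evolve n ω) m =
      ((bit n ω m && !(decide (0 < m) && !bit n ω (m - 1)))
        || (!bit n ω m && bit n ω (m + 1))) := by
  by_cases h : m < n
  · rw [bit, dif_pos h]; rfl
  · rw [bit, dif_neg h]
    rw [bit_out (m := m) (le_of_not_gt h), bit_out (m := m+1) (by omega)]
    simp

lemma zerosBefore_eq_sum (n : ℕ) (ω : Fin n → Bool) (m : ℕ) :
    zerosBefore n ω m = ∑ k ∈ Finset.range n, if k < m ∧ bit n ω k = false then 1 else 0 := by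
  rw [zerosBefore, Finset.card_filter, ← Fin.sum_univ_eq_sum_range]
  refine Finset.sum_congr rfl fun l _ => ?_
  simp [bit, l.isLt]

lemma onesFrom_eq_sum (n : ℕ) (ω : Fin n → Bool) (m : ℕ) :
    onesFrom n ω m = ∑ k ∈ Finset.range n, if m ≤ k ∧ bit n ω k = true then 1 else 0 := by
  rw [onesFrom, Finset.card_filter, ← Fin.sum_univ_eq_sum_range]
  refine Finset.sum_congr rfl fun l _ => ?_
  simp [bit, l.isLt]

lemma zB_zero (n : ℕ) (ω : Fin n → Bool) : zerosBefore n ω 0 = 0 := by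
  rw [zerosBefore_eq_sum]; simp

lemma oF_ge {n : ℕ} (ω : Fin n → Bool) {m : ℕ} (h : n ≤ m) : onesFrom n ω m = 0 := by
  rw [onesFrom_eq_sum]
  refine Finset.sum_eq_zero fun k hk => ?_
  rw [Finset.mem_range] at hk
  rw [if_neg (by omega)]

lemma zB_le (n : ℕ) (ω : Fin n → Bool) (m : ℕ) : zerosBefore n ω m ≤ n := by
  refine le_trans (Finset.card_filter_le _ _) ?_
  simp

lemma zB_succ (n : ℕ) (ω : Fin n → Bool) (m : ℕ) :
    zerosBefore n ω (m + 1)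
      = zerosBefore n ω m + (if m < n ∧ bit n ω m = false then 1 else 0) := by
  rw [zerosBefore_eq_sum, zerosBefore_eq_sum]
  have h : ∀ k ∈ Finset.range n,
      (if k < m + 1 ∧ bit n ω k = false then 1 else 0)
      = (if k < m ∧ bit n ω k = false then 1 else 0)
        + (if k = m then (if bit n ω k = false then (1:ℕ) else 0) else 0) := by
    intro k _
    rcases Bool.eq_false_or_eq_true (bit n ω k) with hb | hb <;>
      simp [hb] <;> split_ifs <;> omega
  rw [Finset.sum_congr rfl h, Finset.sum_add_distrib, Finset.sum_ite_eq']
  simp only [Finset.mem_range]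
  congr 1
  split_ifs <;> simp_all <;> omega

lemma oF_succ (n : ℕ) (ω : Fin n → Bool) (m : ℕ) :
    onesFrom n ω m
      = onesFrom n ω (m + 1) + (if m < n ∧ bit n ω m = true then 1 else 0) := by
  rw [onesFrom_eq_sum, onesFrom_eq_sum]
  have h : ∀ k ∈ Finset.range n,
      (if m ≤ k ∧ bit n ω k = true then 1 else 0)
      = (if m + 1 ≤ k ∧ bit n ω k = true then 1 else 0)
        + (if k = m then (if bit n ω k = true then (1:ℕ) else 0) else 0) := by
    intro k _
    rcases Bool.eq_false_or_eq_true (bit n ω k) with hb | hb <;>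
      simp [hb] <;> split_ifs <;> omega
  rw [Finset.sum_congr rfl h, Finset.sum_add_distrib, Finset.sum_ite_eq']
  simp only [Finset.mem_range]
  congr 1
  split_ifs <;> simp_all <;> omega

lemma chi_ind_z (n : ℕ) (ω : Fin n → Bool) (m : ℕ) :
    (if m < n ∧ bit n (evolve n ω) m = false then (1:ℕ) else 0) + chi n ω (m + 1)
      = (if m < n ∧ bit n ω m = false then 1 else 0) + chi n ω m := by
  have hb : bit n ω ((m+1) - 1) = bit n ω m := by norm_num
  by_cases hm : m < n
  · rcases Nat.eq_zero_or_pos m with h0 | h0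
    · subst h0
      rcases Bool.eq_false_or_eq_true (bit n ω 0) with h1 | h1 <;>
        rcases Bool.eq_false_or_eq_true (bit n ω 1) with h2 | h2 <;>
          simp [chi, bit_evolve, h1, h2, hm]
    · rcases Bool.eq_false_or_eq_true (bit n ω (m-1)) with h0' | h0' <;>
      rcases Bool.eq_false_or_eq_true (bit n ω m) with h1 | h1 <;>
        rcases Bool.eq_false_or_eq_true (bit n ω (m+1)) with h2 | h2 <;>
          simp [chi, bit_evolve, h0', h1, h2, hm, h0, Nat.ne_of_gt h0, (Nat.ne_of_gt h0).symm]
  · have e1 : bit n ω m = false := bit_out (by omega)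
    have e2 : bit n ω (m+1) = false := bit_out (by omega)
    have e3 : bit n (evolve n ω) m = false := bit_out (by omega)
    simp [chi, e1, e2, e3, hm]

lemma chi_ind_o (n : ℕ) (ω : Fin n → Bool) (m : ℕ) :
    (if m < n ∧ bit n (evolve n ω) m = true then (1:ℕ) else 0) + chi n ω m
      = (if m < n ∧ bit n ω m = true then 1 else 0) + chi n ω (m + 1) := by
  by_cases hm : m < n
  · rcases Nat.eq_zero_or_pos m with h0 | h0
    · subst h0
      rcases Bool.eq_false_or_eq_true (bit n ω 0) with h1 | h1 <;>
        rcases Bool.eq_false_or_eq_true (bit n ω 1) with h2 | h2 <;>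
          simp [chi, bit_evolve, h1, h2, hm]
    · rcases Bool.eq_false_or_eq_true (bit n ω (m-1)) with h0' | h0' <;>
      rcases Bool.eq_false_or_eq_true (bit n ω m) with h1 | h1 <;>
        rcases Bool.eq_false_or_eq_true (bit n ω (m+1)) with h2 | h2 <;>
          simp [chi, bit_evolve, h0', h1, h2, hm, h0, Nat.ne_of_gt h0, (Nat.ne_of_gt h0).symm]
  · have e1 : bit n ω m = false := bit_out (by omega)
    have e2 : bit n ω (m+1) = false := bit_out (by omega)
    have e3 : bit n (evolve n ω) m = false := bit_out (by omega)
    simp [chi, e1, e2, e3, hm]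

lemma zB_evolve (n : ℕ) (ω : Fin n → Bool) (m : ℕ) :
    zerosBefore n (evolve n ω) m + chi n ω m = zerosBefore n ω m := by
  induction m with
  | zero => simp [zB_zero, chi]
  | succ m ih =>
    rw [zB_succ, zB_succ]
    have := chi_ind_z n ω m
    omega

lemma oF_evolve (n : ℕ) (ω : Fin n → Bool) (m : ℕ) :
    onesFrom n (evolve n ω) m + chi n ω m = onesFrom n ω m := by
  have key : ∀ k m, n ≤ m + k → onesFrom n (evolve n ω) m + chi n ω m = onesFrom n ω m := by
    intro k
    induction k with
    | zero =>
      intro m hm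
      have e1 : bit n ω m = false := bit_out (by omega)
      rw [oF_ge _ (by omega), oF_ge _ (by omega)]
      simp [chi, e1]
    | succ k ih =>
      intro m hm
      by_cases hnm : n ≤ m
      · have e1 : bit n ω m = false := bit_out (by omega)
        rw [oF_ge _ (by omega), oF_ge _ (by omega)]
        simp [chi, e1]
      · rw [oF_succ n ω m, oF_succ n (evolve n ω) m]
        have h1 := ih (m+1) (by omega)
        have h2 := chi_ind_o n ω m
        omega
  exact key (n+1) m (by omega)

lemma key (n : ℕ) (ω : Fin n → Bool) (i j : ℕ) (hi : 1 ≤ i) (hj : 1 ≤ j) :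
    (∃ m ≤ n, i ≤ zerosBefore n (evolve n ω) m ∧ j ≤ onesFrom n (evolve n ω) m)
      ↔ (∃ m ≤ n, i + 1 ≤ zerosBefore n ω m ∧ j ≤ onesFrom n ω m)
        ∨ (∃ m ≤ n, i ≤ zerosBefore n ω m ∧ j + 1 ≤ onesFrom n ω m) := by
  constructor
  · rintro ⟨m, hmn, h1, h2⟩
    have hz := zB_evolve n ω m
    have ho := oF_evolve n ω m
    by_cases hc : 0 < m ∧ bit n ω (m - 1) = false ∧ bit n ω m = true
    · have : chi n ω m = 1 := by rw [chi, if_pos hc]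
      left; exact ⟨m, hmn, by omega, by omega⟩
    · have hchi : chi n ω m = 0 := by rw [chi, if_neg hc]
      rcases Bool.eq_false_or_eq_true (bit n ω m) with hbm | hbm
      swap
      · -- bit m = false: move to m+1
        have hmn' : m < n := by
          by_contra hcc
          have : onesFrom n (evolve n ω) m = 0 := oF_ge _ (by omega)
          omega
        left
        refine ⟨m + 1, by omega, ?_, ?_⟩
        · rw [zB_succ, if_pos ⟨hmn', hbm⟩]; omega
        · have hos := oF_succ n ω m
          rw [if_neg (by simp [hbm])] at hos; omega
      · -- bit m = true: since chi = 0, m = 0 or bit (m-1) = true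
        have hm0 : 0 < m := by
          rcases Nat.eq_zero_or_pos m with h0 | h0
          · exfalso; subst h0
            have := zB_zero n (evolve n ω); omega
          · exact h0
        have hbm' : bit n ω (m-1) = true := by
          rcases Bool.eq_false_or_eq_true (bit n ω (m-1)) with hb | hb
          · exact hb
          · exact absurd ⟨hm0, hb, hbm⟩ hc
        have hmn' : m < n := bit_lt hbm
        right
        refine ⟨m - 1, by omega, ?_, ?_⟩
        · have := zB_succ n ω (m-1)
          rw [Nat.sub_add_cancel hm0, if_neg (by simp [hbm'])] at this
          omega
        · have := oF_succ n ω (m-1)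
          rw [Nat.sub_add_cancel hm0, if_pos ⟨by omega, hbm'⟩] at this
          omega
  · rintro (⟨m, hmn, h1, h2⟩ | ⟨m, hmn, h1, h2⟩)
    · by_cases hc : 0 < m ∧ bit n ω (m - 1) = false ∧ bit n ω m = true
      · -- shift to m - 1
        obtain ⟨hm0, hb0, hb1⟩ := hc
        have hmn' : m < n := bit_lt hb1
        have hchi : chi n ω (m-1) = 0 := by
          rw [chi, if_neg]; rintro ⟨_, _, hb⟩
          simp_all
        have hz := zB_evolve n ω (m-1)
        have ho := oF_evolve n ω (m-1)
        have hzs := zB_succ n ω (m-1)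
        rw [Nat.sub_add_cancel hm0, if_pos ⟨by omega, hb0⟩] at hzs
        have hos := oF_succ n ω (m-1)
        rw [Nat.sub_add_cancel hm0, if_neg (by simp [hb0])] at hos
        exact ⟨m - 1, by omega, by omega, by omega⟩
      · have hchi : chi n ω m = 0 := by rw [chi, if_neg hc]
        have hz := zB_evolve n ω m
        have ho := oF_evolve n ω m
        exact ⟨m, hmn, by omega, by omega⟩
    · by_cases hc : 0 < m ∧ bit n ω (m - 1) = false ∧ bit n ω m = true
      · -- shift to m + 1
        obtain ⟨hm0, hb0, hb1⟩ := hc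
        have hmn' : m < n := bit_lt hb1
        have hchi : chi n ω (m+1) = 0 := by
          rw [chi, if_neg]; rintro ⟨_, hb, _⟩
          simp_all
        have hz := zB_evolve n ω (m+1)
        have ho := oF_evolve n ω (m+1)
        have hzs := zB_succ n ω m
        rw [if_neg (by simp [hb1])] at hzs
        have hos := oF_succ n ω m
        rw [if_pos ⟨hmn', hb1⟩] at hos
        exact ⟨m + 1, by omega, by omega, by omega⟩
      · have hchi : chi n ω m = 0 := by rw [chi, if_neg hc]
        have hz := zB_evolve n ω m
        have ho := oF_evolve n ω m
        exact ⟨m, hmn, by omega, by omega⟩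

lemma oF_le (n : ℕ) (ω : Fin n → Bool) (m : ℕ) : onesFrom n ω m ≤ n := by
  refine le_trans (Finset.card_filter_le _ _) ?_
  simp

lemma mem_diagY {n : ℕ} {ω : Fin n → Bool} {a b : ℕ} :
    (a, b) ∈ diag n ω
      ↔ 1 ≤ a ∧ 1 ≤ b ∧ ∃ m ≤ n, a ≤ zerosBefore n ω m ∧ b ≤ onesFrom n ω m := by
  classical
  simp only [_root_.diag, Finset.mem_filter, Finset.mem_product, Finset.mem_Icc]
  constructor
  · rintro ⟨-, h⟩; exact h
  · rintro ⟨ha, hb, m, hm, h1, h2⟩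
    refine ⟨⟨⟨ha, ?_⟩, hb, ?_⟩, ha, hb, m, hm, h1, h2⟩
    · exact le_trans h1 (zB_le n ω m)
    · exact le_trans h2 (oF_le n ω m)

/-- One step of the evolution on strings corresponds to cutting all exposed
corners of the associated Young diagram. -/
theorem stmt3 (n : ℕ) (ω : Fin n → Bool) :
    diag n (evolve n ω) = cutCorners (diag n ω) := by
  ext ⟨a, b⟩
  rw [cutCorners, Finset.mem_filter]
  simp only [mem_diagY]
  constructor
  · rintro ⟨ha, hb, hP⟩
    have hk := (key n ω a b ha hb).1 hP
    refine ⟨⟨ha, hb, ?_⟩, ?_⟩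
    · rcases hk with ⟨m, hm, h1, h2⟩ | ⟨m, hm, h1, h2⟩
      · exact ⟨m, hm, by omega, h2⟩
      · exact ⟨m, hm, h1, by omega⟩
    · rcases hk with ⟨m, hm, h1, h2⟩ | ⟨m, hm, h1, h2⟩
      · exact Or.inl ⟨by omega, hb, m, hm, h1, h2⟩
      · exact Or.inr ⟨ha, by omega, m, hm, h1, h2⟩
  · rintro ⟨⟨ha, hb, -⟩, hcor⟩
    refine ⟨ha, hb, (key n ω a b ha hb).2 ?_⟩
    rcases hcor with h | h
    · exact Or.inl h.2.2
    · exact Or.inr h.2.2
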